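/- Suppose ε > 0 and a constant a > 0, and define ψ_n⁻ and ψ_n⁺ with d(t) = a·t, so that in particular ψ_n⁺(x,t) := (−1)^n·2^{n−1}·n!·(εt)^{n/2}·e^{x·a·t/(εt)}·erfc_n((x + at)/(2√(εt))). Then for every n ≥ 0, both ψ_n⁻ and ψ_n⁺ satisfy the homogeneous constant-coefficient convection–diffusion equation −ε·∂²ψ/∂x² + a·∂ψ/∂x + ∂ψ/∂t = 0 for all x ∈ ℝ, t > 0. -/

import Mathlib

open Real MeasureTheory Set

/-- Iterated complementary error functions, shifted index:
`erfcI 0 = erfc_{-1}`, `erfcI (n+1) = erfc_n`. -/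
noncomputable def erfcI : ℕ → ℝ → ℝ
  | 0, x => (2 / Real.sqrt π) * Real.exp (-x ^ 2)
  | (n + 1), x => ∫ s in Set.Ioi x, erfcI n s

/-- `ψₙ⁻` with `d(t) = a·t`. -/
noncomputable def psiMinusC (ε a : ℝ) (n : ℕ) (x t : ℝ) : ℝ :=
  (-1 : ℝ) ^ n * ((2 : ℝ) ^ n / 2) * (n.factorial : ℝ) * Real.sqrt (ε * t) ^ n *
    erfcI (n + 1) ((x - a * t) / (2 * Real.sqrt (ε * t)))

/-- `ψₙ⁺` with `d(t) = a·t`. -/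
noncomputable def psiPlusC (ε a : ℝ) (n : ℕ) (x t : ℝ) : ℝ :=
  (-1 : ℝ) ^ n * ((2 : ℝ) ^ n / 2) * (n.factorial : ℝ) * Real.sqrt (ε * t) ^ n *
    Real.exp (x * (a * t) / (ε * t)) *
      erfcI (n + 1) ((x + a * t) / (2 * Real.sqrt (ε * t)))


open Filter

lemma erfcI_succ_eq (n : ℕ) : erfcI (n + 1) = fun x => ∫ s in Set.Ioi x, erfcI n s := rfl

lemma erfcI_nonneg : ∀ n x, 0 ≤ erfcI n x := by
  intro n
  induction n with
  | zero =>
    intro x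
    exact mul_nonneg (div_nonneg two_pos.le (Real.sqrt_nonneg _)) (Real.exp_pos _).le
  | succ m ih =>
    intro x
    exact MeasureTheory.setIntegral_nonneg measurableSet_Ioi fun s _ => ih s

lemma integral_Ioi_repr {f : ℝ → ℝ} (hi : ∀ x : ℝ, IntegrableOn f (Ioi x)) (x : ℝ) :
    ∫ s in Ioi x, f s = (∫ s in Ioi 0, f s) - ∫ s in (0:ℝ)..x, f s := by
  rcases le_total 0 x with h | h
  · have hsplit : (∫ s in Ioi (0:ℝ), f s) = (∫ s in Ioc 0 x, f s) + ∫ s in Ioi x, f s := by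
      rw [← MeasureTheory.setIntegral_union (Ioc_disjoint_Ioi le_rfl) measurableSet_Ioi
        ((hi 0).mono_set Ioc_subset_Ioi_self) (hi x), Ioc_union_Ioi_eq_Ioi h]
    rw [intervalIntegral.integral_of_le h, hsplit]; ring
  · have hsplit : (∫ s in Ioi x, f s) = (∫ s in Ioc x 0, f s) + ∫ s in Ioi 0, f s := by
      rw [← MeasureTheory.setIntegral_union (Ioc_disjoint_Ioi le_rfl) measurableSet_Ioi
        ((hi x).mono_set Ioc_subset_Ioi_self) (hi 0), Ioc_union_Ioi_eq_Ioi h]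
    rw [intervalIntegral.integral_symm, intervalIntegral.integral_of_le h, hsplit]; ring

lemma hasDerivAt_integral_Ioi {f : ℝ → ℝ} (hc : Continuous f)
    (hi : ∀ x : ℝ, IntegrableOn f (Ioi x)) (x : ℝ) :
    HasDerivAt (fun y => ∫ s in Ioi y, f s) (-f x) x := by
  have : (fun y => ∫ s in Ioi y, f s)
      = fun y => (∫ s in Ioi (0:ℝ), f s) - ∫ s in (0:ℝ)..y, f s := by
    funext y; exact integral_Ioi_repr hi y
  rw [this]
  have h2 : HasDerivAt (fun y => ∫ s in (0:ℝ)..y, f s) (f x) x :=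
    intervalIntegral.integral_hasDerivAt_right (hc.intervalIntegrable 0 x)
      hc.aestronglyMeasurable.stronglyMeasurableAtFilter hc.continuousAt
  exact ((hasDerivAt_const x (∫ s in Ioi (0:ℝ), f s)).sub h2).congr_deriv (by simp)

lemma erfcI_prop : ∀ n : ℕ, Continuous (erfcI n) ∧
    ∀ x, erfcI n x ≤ 2 / Real.sqrt π * Real.exp (1/4) * Real.exp (-x) := by
  intro n
  induction n with
  | zero =>
    constructor
    · exact continuous_const.mul ((continuous_pow 2).neg.rexp)
    · intro x
      rw [mul_assoc, ← Real.exp_add]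
      refine mul_le_mul_of_nonneg_left (Real.exp_le_exp.2 ?_)
        (div_nonneg two_pos.le (Real.sqrt_nonneg _))
      nlinarith [sq_nonneg (x - 1/2)]
  | succ m ih =>
    obtain ⟨hc, hb⟩ := ih
    have hg : ∀ x : ℝ, IntegrableOn (fun s => 2 / Real.sqrt π * Real.exp (1/4) * Real.exp (-s)) (Ioi x) := by
      intro x
      have := (exp_neg_integrableOn_Ioi x one_pos).const_mul (2 / Real.sqrt π * Real.exp (1/4))
      simpa [IntegrableOn] using this
    have hint : ∀ x : ℝ, IntegrableOn (erfcI m) (Ioi x) := by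
      intro x
      refine Integrable.mono (hg x) (hc.aestronglyMeasurable.restrict) ?_
      filter_upwards with s
      rw [Real.norm_eq_abs, Real.norm_eq_abs, abs_of_nonneg (erfcI_nonneg m s),
        abs_of_nonneg (by positivity)]
      exact hb s
    constructor
    · rw [erfcI_succ_eq, continuous_iff_continuousAt]
      exact fun x => (hasDerivAt_integral_Ioi hc hint x).differentiableAt.continuousAt
    · intro x
      show (∫ s in Ioi x, erfcI m s) ≤ _
      calc (∫ s in Ioi x, erfcI m s)
          ≤ ∫ s in Ioi x, 2 / Real.sqrt π * Real.exp (1/4) * Real.exp (-s) := by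
            exact setIntegral_mono_on (hint x) (hg x) measurableSet_Ioi fun s _ => hb s
        _ = 2 / Real.sqrt π * Real.exp (1/4) * Real.exp (-x) := by
            rw [MeasureTheory.integral_const_mul, integral_exp_neg_Ioi]

lemma erfcI_cont (n : ℕ) : Continuous (erfcI n) := (erfcI_prop n).1

lemma erfcI_intOn (n : ℕ) (x : ℝ) : IntegrableOn (erfcI n) (Ioi x) := by
  have hg : IntegrableOn (fun s => 2 / Real.sqrt π * Real.exp (1/4) * Real.exp (-s)) (Ioi x) := by
    have := (exp_neg_integrableOn_Ioi x one_pos).const_mul (2 / Real.sqrt π * Real.exp (1/4))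
    simpa [IntegrableOn] using this
  refine Integrable.mono hg ((erfcI_cont n).aestronglyMeasurable.restrict) ?_
  filter_upwards with s
  rw [Real.norm_eq_abs, Real.norm_eq_abs, abs_of_nonneg (erfcI_nonneg n s),
    abs_of_nonneg (by positivity)]
  exact (erfcI_prop n).2 s

lemma erfcI_hasDerivAt (n : ℕ) (x : ℝ) : HasDerivAt (erfcI (n + 1)) (-erfcI n x) x := by
  rw [erfcI_succ_eq]
  exact hasDerivAt_integral_Ioi (erfcI_cont n) (erfcI_intOn n) x

lemma erfcI_zero_hasDerivAt (x : ℝ) : HasDerivAt (erfcI 0) (-(2 * x) * erfcI 0 x) x := by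
  have h : HasDerivAt (fun y : ℝ => 2 / Real.sqrt π * Real.exp (-y ^ 2))
      (2 / Real.sqrt π * (Real.exp (-x ^ 2) * -(2 * x))) x := by
    have hp : HasDerivAt (fun y : ℝ => -y ^ 2) (-(2 * x)) x := by
      exact (hasDerivAt_pow 2 x).neg.congr_deriv (by simp)
    exact (hp.exp).const_mul _
  have : erfcI 0 = fun y : ℝ => 2 / Real.sqrt π * Real.exp (-y ^ 2) := rfl
  rw [this]
  convert h using 1
  show -(2 * x) * (2 / Real.sqrt π * Real.exp (-x ^ 2)) = _
  ring

lemma erfcI_tendsto (n : ℕ) : Tendsto (erfcI n) atTop (nhds 0) := by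
  refine squeeze_zero (fun x => erfcI_nonneg n x) (fun x => (erfcI_prop n).2 x) ?_
  simpa using (Real.tendsto_exp_neg_atTop_nhds_zero).const_mul (2 / Real.sqrt π * Real.exp (1/4))

lemma erfcI_mul_tendsto (n : ℕ) : Tendsto (fun x => x * erfcI n x) atTop (nhds 0) := by
  have h1 : Tendsto (fun x : ℝ => 2 / Real.sqrt π * Real.exp (1/4) * (x * Real.exp (-x)))
      atTop (nhds 0) := by
    have := (Real.tendsto_pow_mul_exp_neg_atTop_nhds_zero 1).const_mul
      (2 / Real.sqrt π * Real.exp (1/4))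
    simpa using this
  refine squeeze_zero' ?_ ?_ h1
  · filter_upwards [eventually_ge_atTop (0:ℝ)] with x hx
    exact mul_nonneg hx (erfcI_nonneg n x)
  · filter_upwards [eventually_ge_atTop (0:ℝ)] with x hx
    calc x * erfcI n x ≤ x * (2 / Real.sqrt π * Real.exp (1/4) * Real.exp (-x)) :=
          mul_le_mul_of_nonneg_left ((erfcI_prop n).2 x) hx
      _ = 2 / Real.sqrt π * Real.exp (1/4) * (x * Real.exp (-x)) := by ring

lemma const_zero_of_deriv_zero {H : ℝ → ℝ} (hd : ∀ x, HasDerivAt H 0 x)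
    (hl : Tendsto H atTop (nhds 0)) (x : ℝ) : H x = 0 := by
  have hc : ∀ y, H y = H x := fun y =>
    is_const_of_deriv_eq_zero (fun z => (hd z).differentiableAt) (fun z => (hd z).deriv) y x
  exact tendsto_nhds_unique (Tendsto.congr (fun y => (hc y).symm) tendsto_const_nhds) hl

lemma H_tendsto (n : ℕ) : Tendsto
    (fun y => erfcI n y - 2 * y * erfcI (n+1) y - 2 * ((n:ℝ)+1) * erfcI (n+2) y)
    atTop (nhds 0) := by
  have h1 := erfcI_tendsto n
  have h2 := (erfcI_mul_tendsto (n+1)).const_mul (2:ℝ)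
  have h3 := (erfcI_tendsto (n+2)).const_mul (2 * ((n:ℝ)+1))
  have := (h1.sub h2).sub h3
  simp only [mul_zero, sub_zero] at this
  refine this.congr fun y => by ring

lemma H_deriv (n : ℕ) (x : ℝ) (d : ℝ) (hd : HasDerivAt (erfcI n) d x) :
    HasDerivAt (fun y => erfcI n y - 2 * y * erfcI (n+1) y - 2 * ((n:ℝ)+1) * erfcI (n+2) y)
      (d + 2 * x * erfcI n x + 2 * n * erfcI (n+1) x) x := by
  have h1 : HasDerivAt (fun y => 2 * y * erfcI (n+1) y)
      (2 * erfcI (n+1) x + 2 * x * (-erfcI n x)) x := by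
    have := ((hasDerivAt_id x).const_mul (2:ℝ)).mul (erfcI_hasDerivAt n x)
    exact this.congr_deriv (by simp only [id_eq]; ring)
  have h2 : HasDerivAt (fun y => 2 * ((n:ℝ)+1) * erfcI (n+2) y)
      (2 * ((n:ℝ)+1) * (-erfcI (n+1) x)) x := (erfcI_hasDerivAt (n+1) x).const_mul _
  have := (hd.sub h1).sub h2
  refine this.congr_deriv ?_
  ring

lemma erfcI_rec : ∀ (n : ℕ) (x : ℝ),
    erfcI n x = 2 * x * erfcI (n+1) x + 2 * ((n:ℝ)+1) * erfcI (n+2) x := by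
  intro n
  have key : ∀ x, erfcI n x - 2 * x * erfcI (n+1) x - 2 * ((n:ℝ)+1) * erfcI (n+2) x = 0 := by
    induction n with
    | zero =>
      refine const_zero_of_deriv_zero (fun x => ?_) (H_tendsto 0)
      have := H_deriv 0 x _ (erfcI_zero_hasDerivAt x)
      convert this using 1
      push_cast; ring
    | succ m ih =>
      refine const_zero_of_deriv_zero (fun x => ?_) (H_tendsto (m+1))
      have := H_deriv (m+1) x _ (erfcI_hasDerivAt m x)
      convert this using 1
      have hm := ih x
      push_cast at hm ⊢
      linarith
  intro x
  have := key x
  linarith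

lemma hasDerivAt_neg_erfcI (n : ℕ) (x : ℝ) :
    HasDerivAt (fun y => -erfcI n y) (2 * n * erfcI (n+1) x + 2 * x * erfcI n x) x := by
  cases n with
  | zero =>
    have h := (erfcI_zero_hasDerivAt x).neg
    refine h.congr_deriv ?_
    push_cast; ring
  | succ m =>
    have h := (erfcI_hasDerivAt m x).neg
    refine h.congr_deriv ?_
    rw [erfcI_rec m x]
    push_cast; ring

/-- In the constant-coefficient case, every `ψₙ⁻` and `ψₙ⁺` satisfies the homogeneous
convection–diffusion equation `−ε·ψ_xx + a·ψ_x + ψ_t = 0` for all `x ∈ ℝ`, `t > 0`. -/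
theorem psi_constant_coefficient_pde
    (ε a : ℝ) (hε : 0 < ε) (ha : 0 < a) (n : ℕ) (x t : ℝ) (ht : 0 < t) :
    (-ε * iteratedDeriv 2 (fun y => psiMinusC ε a n y t) x
        + a * deriv (fun y => psiMinusC ε a n y t) x
        + deriv (fun s => psiMinusC ε a n x s) t = 0) ∧
    (-ε * iteratedDeriv 2 (fun y => psiPlusC ε a n y t) x
        + a * deriv (fun y => psiPlusC ε a n y t) x
        + deriv (fun s => psiPlusC ε a n x s) t = 0) := by
  constructor
  · set K : ℝ := (-1 : ℝ) ^ n * ((2 : ℝ) ^ n / 2) * (n.factorial : ℝ) with hK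
    set u : ℝ := Real.sqrt (ε * t) with hu_def
    have hu : 0 < u := Real.sqrt_pos.2 (mul_pos hε ht)
    set z : ℝ := (x - a * t) / (2 * u) with hz_def
    set A : ℝ := erfcI n z with hA
    set B : ℝ := erfcI (n + 1) z with hB
    -- inner spatial derivative
    have hinner : ∀ y : ℝ, HasDerivAt (fun y => (y - a * t) / (2 * u)) (1 / (2 * u)) y :=
      fun y => ((hasDerivAt_id y).sub_const (a * t)).div_const (2 * u)
    have hfun : (fun y => psiMinusC ε a n y t)
        = fun y => K * u ^ n * erfcI (n + 1) ((y - a * t) / (2 * u)) := by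
      funext y; simp only [psiMinusC]; rfl
    -- first spatial derivative
    have hD1 : ∀ y : ℝ, HasDerivAt (fun y => psiMinusC ε a n y t)
        (K * u ^ n * (-erfcI n ((y - a * t) / (2 * u)) * (1 / (2 * u)))) y := by
      intro y
      rw [hfun]
      exact ((erfcI_hasDerivAt n ((y - a * t) / (2 * u))).comp y (hinner y)).const_mul (K * u ^ n)
    have hderiv1 : deriv (fun y => psiMinusC ε a n y t)
        = fun y => K * u ^ n * (-erfcI n ((y - a * t) / (2 * u)) * (1 / (2 * u))) :=
      funext fun y => (hD1 y).deriv
    -- second spatial derivative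
    have hD2 : HasDerivAt (fun y => K * u ^ n * (-erfcI n ((y - a * t) / (2 * u)) * (1 / (2 * u))))
        (K * u ^ n * ((2 * n * B + 2 * z * A) * (1 / (2 * u)) * (1 / (2 * u)))) x := by
      have h := (((hasDerivAt_neg_erfcI n z).comp x (hinner x)).mul_const
        (1 / (2 * u))).const_mul (K * u ^ n)
      simpa [mul_assoc] using h
    -- time derivative
    have hsq : HasDerivAt (fun s => Real.sqrt (ε * s)) (ε / (2 * u)) t := by
      have h1 : HasDerivAt (fun s : ℝ => ε * s) ε t := by
        simpa using (hasDerivAt_id t).const_mul ε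
      have := (Real.hasDerivAt_sqrt (mul_pos hε ht).ne').comp t h1
      refine this.congr_deriv ?_
      rw [hu_def]; ring
    have hpow : HasDerivAt (fun s => Real.sqrt (ε * s) ^ n)
        ((n : ℝ) * u ^ (n - 1) * (ε / (2 * u))) t := by
      exact hsq.pow n
    have hnum : HasDerivAt (fun s : ℝ => x - a * s) (-a) t := by
      simpa using ((hasDerivAt_id t).const_mul a).const_sub x
    have hden : HasDerivAt (fun s : ℝ => 2 * Real.sqrt (ε * s)) (2 * (ε / (2 * u))) t :=
      hsq.const_mul 2
    have hden_ne : 2 * Real.sqrt (ε * t) ≠ 0 := by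
      rw [← hu_def]; positivity
    have hzs : HasDerivAt (fun s : ℝ => (x - a * s) / (2 * Real.sqrt (ε * s)))
        ((-a * (2 * u) - (x - a * t) * (2 * (ε / (2 * u)))) / (2 * u) ^ 2) t := by
      have := hnum.div hden hden_ne
      exact this
    have hDT : HasDerivAt (fun s => psiMinusC ε a n x s)
        (K * ((n : ℝ) * u ^ (n - 1) * (ε / (2 * u))) * B
          + K * u ^ n * (-A * ((-a * (2 * u) - (x - a * t) * (2 * (ε / (2 * u)))) / (2 * u) ^ 2)))
        t := by
      have hF := (erfcI_hasDerivAt n z).comp t hzs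
      rw [hz_def, hu_def] at hF
      have h := (hpow.const_mul K).mul hF
      have heq : (fun s => psiMinusC ε a n x s)
          = fun s => (K * Real.sqrt (ε * s) ^ n) *
              erfcI (n + 1) ((x - a * s) / (2 * Real.sqrt (ε * s))) := by
        funext s; simp [psiMinusC, hK, mul_assoc]
      rw [heq]
      exact h
    -- assemble
    have h2 : iteratedDeriv 2 (fun y => psiMinusC ε a n y t) x
        = K * u ^ n * ((2 * n * B + 2 * z * A) * (1 / (2 * u)) * (1 / (2 * u))) := by
      rw [show (2:ℕ) = 1 + 1 from rfl, iteratedDeriv_succ, iteratedDeriv_one, hderiv1]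
      exact hD2.deriv
    rw [h2, hderiv1, hDT.deriv]
    have hxz : x - a * t = z * (2 * u) := by
      rw [hz_def]; field_simp
    have hnp : (n : ℝ) * u ^ (n - 1) * u = (n : ℝ) * u ^ n := by
      cases n with
      | zero => simp
      | succ m => rw [Nat.add_sub_cancel, pow_succ]; ring
    have hrw : (n : ℝ) * u ^ (n - 1) * (ε / (2 * u)) = (n : ℝ) * u ^ n * ε / (2 * u ^ 2) := by
      rw [← hnp]
      field_simp
    beta_reduce
    rw [← hz_def, ← hA, hrw, hxz]
    field_simp
    ring
  · set K : ℝ := (-1 : ℝ) ^ n * ((2 : ℝ) ^ n / 2) * (n.factorial : ℝ) with hK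
    set u : ℝ := Real.sqrt (ε * t) with hu_def
    have hu : 0 < u := Real.sqrt_pos.2 (mul_pos hε ht)
    -- rewrite the exponential argument
    have harg : ∀ y s : ℝ, s ≠ 0 → y * (a * s) / (ε * s) = y * a / ε := by
      intro y s hs; field_simp
    have hfun : (fun y => psiPlusC ε a n y t)
        = fun y => K * u ^ n * Real.exp (y * a / ε) *
            erfcI (n + 1) ((y + a * t) / (2 * u)) := by
      funext y; simp only [psiPlusC]; rw [harg y t ht.ne']
    -- building blocks
    have hE : ∀ y : ℝ, HasDerivAt (fun y : ℝ => Real.exp (y * a / ε))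
        (Real.exp (y * a / ε) * (a / ε)) y := by
      intro y
      have h : HasDerivAt (fun y : ℝ => y * a / ε) (a / ε) y := by
        simpa using ((hasDerivAt_id y).mul_const a).div_const ε
      simpa using h.exp
    have hinner : ∀ y : ℝ, HasDerivAt (fun y => (y + a * t) / (2 * u)) (1 / (2 * u)) y :=
      fun y => ((hasDerivAt_id y).add_const (a * t)).div_const (2 * u)
    have hGy : ∀ y : ℝ, HasDerivAt (fun y => erfcI (n + 1) ((y + a * t) / (2 * u)))
        (-erfcI n ((y + a * t) / (2 * u)) * (1 / (2 * u))) y :=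
      fun y => by have h := (erfcI_hasDerivAt n ((y + a * t) / (2 * u))).comp y (hinner y); exact h
    -- first spatial derivative
    have hP1 : ∀ y : ℝ, HasDerivAt (fun y => psiPlusC ε a n y t)
        (K * u ^ n * (a / ε) * Real.exp (y * a / ε) * erfcI (n + 1) ((y + a * t) / (2 * u))
          + K * u ^ n * (1 / (2 * u)) * Real.exp (y * a / ε)
              * (-erfcI n ((y + a * t) / (2 * u)))) y := by
      intro y
      rw [hfun]
      have h := (((hE y).const_mul (K * u ^ n)).mul (hGy y))
      refine h.congr_deriv ?_
      ring
    have hderiv1 : deriv (fun y => psiPlusC ε a n y t)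
        = fun y => K * u ^ n * (a / ε) * Real.exp (y * a / ε)
              * erfcI (n + 1) ((y + a * t) / (2 * u))
          + K * u ^ n * (1 / (2 * u)) * Real.exp (y * a / ε)
              * (-erfcI n ((y + a * t) / (2 * u))) :=
      funext fun y => (hP1 y).deriv
    -- second spatial derivative
    have hnegG : HasDerivAt (fun y => -erfcI n ((y + a * t) / (2 * u)))
        ((2 * n * erfcI (n + 1) ((x + a * t) / (2 * u))
            + 2 * ((x + a * t) / (2 * u)) * erfcI n ((x + a * t) / (2 * u))) * (1 / (2 * u))) x :=
      by have h := (hasDerivAt_neg_erfcI n ((x + a * t) / (2 * u))).comp x (hinner x); exact h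
    have hP2 : HasDerivAt (fun y => K * u ^ n * (a / ε) * Real.exp (y * a / ε)
              * erfcI (n + 1) ((y + a * t) / (2 * u))
          + K * u ^ n * (1 / (2 * u)) * Real.exp (y * a / ε)
              * (-erfcI n ((y + a * t) / (2 * u))))
        ((K * u ^ n * (a / ε)) * (Real.exp (x * a / ε) * (a / ε))
              * erfcI (n + 1) ((x + a * t) / (2 * u))
          + (K * u ^ n * (a / ε)) * Real.exp (x * a / ε)
              * (-erfcI n ((x + a * t) / (2 * u)) * (1 / (2 * u)))
          + ((K * u ^ n * (1 / (2 * u))) * (Real.exp (x * a / ε) * (a / ε))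
              * (-erfcI n ((x + a * t) / (2 * u)))
            + (K * u ^ n * (1 / (2 * u))) * Real.exp (x * a / ε)
              * ((2 * n * erfcI (n + 1) ((x + a * t) / (2 * u))
                  + 2 * ((x + a * t) / (2 * u)) * erfcI n ((x + a * t) / (2 * u)))
                * (1 / (2 * u))))) x := by
      have h1 := ((hE x).const_mul (K * u ^ n * (a / ε))).mul (hGy x)
      have h2 := ((hE x).const_mul (K * u ^ n * (1 / (2 * u)))).mul hnegG
      have h := h1.add h2
      exact h
    -- time derivative
    have hsq : HasDerivAt (fun s => Real.sqrt (ε * s)) (ε / (2 * u)) t := by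
      have h1 : HasDerivAt (fun s : ℝ => ε * s) ε t := by
        simpa using (hasDerivAt_id t).const_mul ε
      have := (Real.hasDerivAt_sqrt (mul_pos hε ht).ne').comp t h1
      refine this.congr_deriv ?_
      rw [hu_def]; ring
    have hpow : HasDerivAt (fun s => Real.sqrt (ε * s) ^ n)
        ((n : ℝ) * u ^ (n - 1) * (ε / (2 * u))) t := by
      exact hsq.pow n
    have hnum : HasDerivAt (fun s : ℝ => x + a * s) a t := by
      simpa using ((hasDerivAt_id t).const_mul a).const_add x
    have hden : HasDerivAt (fun s : ℝ => 2 * Real.sqrt (ε * s)) (2 * (ε / (2 * u))) t :=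
      hsq.const_mul 2
    have hden_ne : 2 * Real.sqrt (ε * t) ≠ 0 := by
      rw [← hu_def]; positivity
    have hws : HasDerivAt (fun s : ℝ => (x + a * s) / (2 * Real.sqrt (ε * s)))
        ((a * (2 * u) - (x + a * t) * (2 * (ε / (2 * u)))) / (2 * u) ^ 2) t := by
      have := hnum.div hden hden_ne
      exact this
    have hφeq : (fun s => psiPlusC ε a n x s) =ᶠ[nhds t]
        fun s => K * Real.sqrt (ε * s) ^ n * Real.exp (x * a / ε) *
          erfcI (n + 1) ((x + a * s) / (2 * Real.sqrt (ε * s))) := by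
      filter_upwards [eventually_gt_nhds ht] with s hs
      simp only [psiPlusC]; rw [harg x s hs.ne']
    have hφ : HasDerivAt (fun s => K * Real.sqrt (ε * s) ^ n * Real.exp (x * a / ε) *
          erfcI (n + 1) ((x + a * s) / (2 * Real.sqrt (ε * s))))
        ((K * ((n : ℝ) * u ^ (n - 1) * (ε / (2 * u)))) * Real.exp (x * a / ε)
            * erfcI (n + 1) ((x + a * t) / (2 * u))
          + (K * u ^ n) * Real.exp (x * a / ε)
            * (-erfcI n ((x + a * t) / (2 * u))
                * ((a * (2 * u) - (x + a * t) * (2 * (ε / (2 * u)))) / (2 * u) ^ 2))) t := by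
      have hF := (erfcI_hasDerivAt n ((x + a * t) / (2 * u))).comp t hws
      have h := ((hpow.const_mul K).mul_const (Real.exp (x * a / ε))).mul hF
      rw [hu_def]
      exact h
    have hDT : deriv (fun s => psiPlusC ε a n x s) t
        = (K * ((n : ℝ) * u ^ (n - 1) * (ε / (2 * u)))) * Real.exp (x * a / ε)
            * erfcI (n + 1) ((x + a * t) / (2 * u))
          + (K * u ^ n) * Real.exp (x * a / ε)
            * (-erfcI n ((x + a * t) / (2 * u))
                * ((a * (2 * u) - (x + a * t) * (2 * (ε / (2 * u)))) / (2 * u) ^ 2)) := by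
      rw [hφeq.deriv_eq]
      exact hφ.deriv
    -- assemble
    have h2 : iteratedDeriv 2 (fun y => psiPlusC ε a n y t) x
        = (K * u ^ n * (a / ε)) * (Real.exp (x * a / ε) * (a / ε))
              * erfcI (n + 1) ((x + a * t) / (2 * u))
          + (K * u ^ n * (a / ε)) * Real.exp (x * a / ε)
              * (-erfcI n ((x + a * t) / (2 * u)) * (1 / (2 * u)))
          + ((K * u ^ n * (1 / (2 * u))) * (Real.exp (x * a / ε) * (a / ε))
              * (-erfcI n ((x + a * t) / (2 * u)))
            + (K * u ^ n * (1 / (2 * u))) * Real.exp (x * a / ε)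
              * ((2 * n * erfcI (n + 1) ((x + a * t) / (2 * u))
                  + 2 * ((x + a * t) / (2 * u)) * erfcI n ((x + a * t) / (2 * u)))
                * (1 / (2 * u)))) := by
      rw [show (2:ℕ) = 1 + 1 from rfl, iteratedDeriv_succ, iteratedDeriv_one, hderiv1]
      exact hP2.deriv
    rw [h2, hderiv1, hDT]
    beta_reduce
    set w : ℝ := (x + a * t) / (2 * u) with hw_def
    set A : ℝ := erfcI n w with hA
    set B : ℝ := erfcI (n + 1) w with hB
    set Ex : ℝ := Real.exp (x * a / ε) with hEx
    have hxw : x + a * t = w * (2 * u) := by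
      rw [hw_def]; field_simp
    have hnp : (n : ℝ) * u ^ (n - 1) * u = (n : ℝ) * u ^ n := by
      cases n with
      | zero => simp
      | succ m => rw [Nat.add_sub_cancel, pow_succ]; ring
    have hrw : (n : ℝ) * u ^ (n - 1) * (ε / (2 * u)) = (n : ℝ) * u ^ n * ε / (2 * u ^ 2) := by
      rw [← hnp]
      field_simp
    rw [hrw, hxw]
    field_simp
    ring
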